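/- Let $A\subseteq[0,1]^d$ be a regular Borel set (i.e. $\lambda(\partial A)=0$) with $\lambda(A)>0$, let $\Gamma_n(A)=nA\cap\mathbb{Z}^d$ and $\partial\Gamma_n(A)=\{i\in\Gamma_n(A): \exists j\notin\Gamma_n(A), |i-j|=1\}$. Then $|\partial\Gamma_n(A)|/|\Gamma_n(A)|\to 0$ as $n\to\infty$. -/

import Mathlib

/-!
Around every lattice point of a bounded set `S ⊆ ℝ^d` put the unit cube it centres (the sup-metric
ball of radius `1/2`). These cubes are disjoint and lie in the `1/2`-neighbourhood of `S`; every
point of `S` farther than `1/2` from `∂S` lies in the cube of its rounded coordinates, which is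
then a lattice point of `S`; and a point of the discrete boundary lies within distance `1` of
`∂S`. Writing `N_r` for the closed `r`-neighbourhood and `ε_n = λ(N_{2/n}(∂A))`, scaling by `n`
gives `|∂Γ_n(A)| ≤ n^d ε_n` and `|Γ_n(A)| ≥ n^d (λ(A) - ε_n)`, and `ε_n → λ(∂A) = 0` since `∂A`
is closed and bounded.
-/

open MeasureTheory Filter Pointwise Metric Set Bornology Topology
open scoped ENNReal

section Lattice

variable {ι : Type*} [Fintype ι]

def latticePoints (S : Set (ι → ℝ)) : Set (ι → ℤ) :=
  {i | (fun k => (i k : ℝ)) ∈ S}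

def discreteBoundary (S : Set (ι → ℝ)) : Set (ι → ℤ) :=
  {i | (fun k => (i k : ℝ)) ∈ S ∧ ∃ j : ι → ℤ, (fun k => (j k : ℝ)) ∉ S ∧ ‖i - j‖ = 1}

theorem isometry_intCast_pi : Isometry (fun (i : ι → ℤ) (k : ι) => (i k : ℝ)) :=
  Isometry.piMap (fun _ => ((↑) : ℤ → ℝ)) fun _ => Real.isometry_intCast

theorem one_le_dist_of_ne {i j : ι → ℤ} (h : i ≠ j) : 1 ≤ dist i j := by
  obtain ⟨k, hk⟩ := Function.ne_iff.mp h
  calc (1 : ℝ) ≤ dist (i k) (j k) := by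
        rw [Int.dist_eq]; exact_mod_cast Int.one_le_abs (sub_ne_zero.mpr hk)
    _ ≤ dist i j := dist_le_pi_dist i j k

theorem latticePoints_finite {S : Set (ι → ℝ)} (hS : IsBounded S) :
    (latticePoints S).Finite :=
  (isometry_intCast_pi.antilipschitz.isBounded_preimage hS).isCompact_closure.finite_of_discrete
    |>.subset subset_closure

theorem card_latticePoints_le_volume_cthickening {S : Set (ι → ℝ)} (hS : IsBounded S) :
    (Nat.card (latticePoints S) : ℝ≥0∞) ≤ volume (cthickening (1 / 2) S) := by
  classical
  set Γ := (latticePoints_finite hS).toFinset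
  have hdisj : (Γ : Set (ι → ℤ)).PairwiseDisjoint
      fun i => ball (fun k => (i k : ℝ)) (1 / 2) := fun i _ j _ hij =>
    ball_disjoint_ball <| by
      rw [isometry_intCast_pi.dist_eq i j]; linarith [one_le_dist_of_ne hij]
  calc (Nat.card (latticePoints S) : ℝ≥0∞)
      = ∑ i ∈ Γ, volume (ball (fun k => (i k : ℝ)) (1 / 2)) := by
        simp [Γ, Nat.card_coe_set_eq, Set.ncard_eq_toFinset_card _ (latticePoints_finite hS)]
    _ = volume (⋃ i ∈ Γ, ball (fun k => (i k : ℝ)) (1 / 2)) :=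
        (measure_biUnion_finset hdisj fun _ _ => measurableSet_ball).symm
    _ ≤ volume (cthickening (1 / 2) S) := measure_mono <| iUnion₂_subset fun i hi =>
        ball_subset_closedBall.trans <|
          closedBall_subset_cthickening (E := S) ((latticePoints_finite hS).mem_toFinset.mp hi) _

theorem mem_cthickening_frontier_of_dist_le {E : Type*} [NormedAddCommGroup E]
    [NormedSpace ℝ E] [FiniteDimensional ℝ E] {S : Set E} {x y : E} {δ : ℝ}
    (hx : x ∈ S) (hy : y ∉ S) (hxy : dist x y ≤ δ) : x ∈ cthickening δ (frontier S) := by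
  obtain ⟨z, hz, hxz⟩ :=
    exists_mem_frontier_infDist_compl_eq_dist hx (ne_univ_iff_exists_notMem _ |>.mpr ⟨y, hy⟩)
  exact mem_cthickening_of_dist_le x z δ _ hz (hxz ▸ (infDist_le_dist_of_mem hy).trans hxy)

theorem diff_cthickening_frontier_subset_iUnion_closedBall (S : Set (ι → ℝ)) :
    S \ cthickening (1 / 2) (frontier S) ⊆
      ⋃ i ∈ latticePoints S, closedBall (fun k => (i k : ℝ)) (1 / 2) := by
  rintro x ⟨hxS, hx⟩
  have hround : dist x (fun k => (round (x k) : ℝ)) ≤ 1 / 2 :=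
    (dist_pi_le_iff (by norm_num)).mpr fun k => by
      simpa [Real.dist_eq] using abs_sub_round (x k)
  have hmem : (fun k => (round (x k) : ℝ)) ∈ S := by
    by_contra hnot
    exact hx (mem_cthickening_frontier_of_dist_le hxS hnot hround)
  exact mem_biUnion (x := fun k => round (x k)) hmem (mem_closedBall.mpr hround)

theorem volume_le_card_latticePoints_add {S : Set (ι → ℝ)} (hS : IsBounded S) :
    volume S ≤ Nat.card (latticePoints S) + volume (cthickening (1 / 2) (frontier S)) := by
  classical
  set Γ := (latticePoints_finite hS).toFinset
  have hcover : S \ cthickening (1 / 2) (frontier S) ⊆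
      ⋃ i ∈ Γ, closedBall (fun k => (i k : ℝ)) (1 / 2) := by
    simpa [Γ] using diff_cthickening_frontier_subset_iUnion_closedBall S
  calc volume S
      ≤ volume (S \ cthickening (1 / 2) (frontier S))
          + volume (cthickening (1 / 2) (frontier S)) :=
        (measure_mono (subset_sdiff_union _ _)).trans (measure_union_le _ _)
    _ ≤ (∑ i ∈ Γ, volume (closedBall (fun k => (i k : ℝ)) (1 / 2)))
          + volume (cthickening (1 / 2) (frontier S)) := by
        gcongr
        exact (measure_mono hcover).trans (measure_biUnion_finset_le _ _)
    _ = Nat.card (latticePoints S) + volume (cthickening (1 / 2) (frontier S)) := by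
        simp [Γ, Nat.card_coe_set_eq, Set.ncard_eq_toFinset_card _ (latticePoints_finite hS)]

theorem discreteBoundary_subset_latticePoints_cthickening (S : Set (ι → ℝ)) :
    discreteBoundary S ⊆ latticePoints (cthickening 1 (frontier S)) := by
  rintro i ⟨hi, j, hj, hij⟩
  refine mem_cthickening_frontier_of_dist_le hi hj ?_
  rw [isometry_intCast_pi.dist_eq i j, dist_eq_norm, hij]

theorem card_discreteBoundary_le_volume_cthickening {S : Set (ι → ℝ)} (hS : IsBounded S) :
    (Nat.card (discreteBoundary S) : ℝ≥0∞) ≤ volume (cthickening (3 / 2) (frontier S)) := by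
  have hF : IsBounded (cthickening 1 (frontier S)) :=
    (hS.closure.subset frontier_subset_closure).cthickening
  calc (Nat.card (discreteBoundary S) : ℝ≥0∞)
      ≤ Nat.card (latticePoints (cthickening 1 (frontier S))) := by
        exact_mod_cast Nat.card_mono (latticePoints_finite hF)
          (discreteBoundary_subset_latticePoints_cthickening S)
    _ ≤ volume (cthickening (1 / 2) (cthickening 1 (frontier S))) :=
        card_latticePoints_le_volume_cthickening hF
    _ ≤ volume (cthickening (3 / 2) (frontier S)) := by
        refine measure_mono ((cthickening_cthickening_subset (by norm_num) zero_le_one _).trans ?_)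
        norm_num

end Lattice

theorem frontier_smul₀ {G₀ α : Type*} [GroupWithZero G₀] [MulAction G₀ α] [TopologicalSpace α]
    [ContinuousConstSMul G₀ α] {c : G₀} (hc : c ≠ 0) (s : Set α) :
    frontier (c • s) = c • frontier s :=
  ((Homeomorph.smulOfNeZero c hc).image_frontier s).symm

theorem cthickening_smul₀ {E : Type*} [NormedAddCommGroup E] [NormedSpace ℝ E] {c : ℝ}
    (hc : 0 < c) (δ : ℝ) (s : Set E) : cthickening (c * δ) (c • s) = c • cthickening δ s := by
  ext x
  rw [mem_smul_set_iff_inv_smul_mem₀ hc.ne', mem_cthickening_iff, mem_cthickening_iff,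
    ← smul_inv_smul₀ hc.ne' x, infEDist_smul₀ hc.ne', inv_smul_smul₀ hc.ne',
    ENNReal.ofReal_mul hc.le, ENNReal.smul_def, smul_eq_mul, Real.nnnorm_of_nonneg hc.le,
    ← ENNReal.ofReal_eq_coe_nnreal]
  exact ENNReal.mul_le_mul_iff_right (by simpa using hc) ENNReal.ofReal_ne_top

section Scaling

variable {ι : Type*} [Fintype ι] {A : Set (ι → ℝ)} {c : ℝ}

theorem volume_cthickening_smul (hc : 0 < c) (r : ℝ) (s : Set (ι → ℝ)) :
    volume (cthickening r (c • s)) =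
      ENNReal.ofReal (c ^ Fintype.card ι) * volume (cthickening (r / c) s) := by
  have h := cthickening_smul₀ hc (r / c) s
  rw [mul_div_cancel₀ r hc.ne'] at h
  rw [h, Measure.addHaar_smul_of_nonneg volume hc.le, Module.finrank_fintype_fun_eq_card]

theorem volume_cthickening_frontier_ne_top (hA : IsBounded A) (r : ℝ) :
    volume (cthickening r (frontier A)) ≠ ⊤ :=
  (hA.closure.subset frontier_subset_closure).cthickening.measure_lt_top.ne

theorem card_discreteBoundary_smul_le (hA : IsBounded A) (hc : 0 < c) :
    (Nat.card (discreteBoundary (c • A)) : ℝ) ≤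
      c ^ Fintype.card ι * (volume (cthickening (2 / c) (frontier A))).toReal := by
  have h : (Nat.card (discreteBoundary (c • A)) : ℝ≥0∞) ≤
      ENNReal.ofReal (c ^ Fintype.card ι) * volume (cthickening (2 / c) (frontier A)) := by
    calc (Nat.card (discreteBoundary (c • A)) : ℝ≥0∞)
        ≤ volume (cthickening (3 / 2) (frontier (c • A))) :=
          card_discreteBoundary_le_volume_cthickening (hA.smul₀ c)
      _ ≤ volume (cthickening 2 (frontier (c • A))) :=
          measure_mono (cthickening_mono (by norm_num) _)
      _ = _ := by rw [frontier_smul₀ hc.ne', volume_cthickening_smul hc]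
  have := ENNReal.toReal_mono (ENNReal.mul_ne_top ENNReal.ofReal_ne_top
    (volume_cthickening_frontier_ne_top hA _)) h
  rwa [ENNReal.toReal_mul, ENNReal.toReal_natCast, ENNReal.toReal_ofReal (by positivity)] at this

theorem mul_volume_le_card_latticePoints_smul_add (hA : IsBounded A) (hc : 0 < c) :
    c ^ Fintype.card ι * (volume A).toReal ≤ Nat.card (latticePoints (c • A)) +
      c ^ Fintype.card ι * (volume (cthickening (2 / c) (frontier A))).toReal := by
  have h : ENNReal.ofReal (c ^ Fintype.card ι) * volume A ≤ Nat.card (latticePoints (c • A)) +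
      ENNReal.ofReal (c ^ Fintype.card ι) * volume (cthickening (2 / c) (frontier A)) := by
    calc ENNReal.ofReal (c ^ Fintype.card ι) * volume A
        = volume (c • A) := by
          rw [Measure.addHaar_smul_of_nonneg volume hc.le, Module.finrank_fintype_fun_eq_card]
      _ ≤ Nat.card (latticePoints (c • A)) + volume (cthickening (1 / 2) (frontier (c • A))) :=
          volume_le_card_latticePoints_add (hA.smul₀ c)
      _ ≤ Nat.card (latticePoints (c • A)) + volume (cthickening 2 (frontier (c • A))) := by
          gcongr
          exact cthickening_mono (by norm_num) _
      _ = _ := by rw [frontier_smul₀ hc.ne', volume_cthickening_smul hc]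
  have hfin : ENNReal.ofReal (c ^ Fintype.card ι) *
      volume (cthickening (2 / c) (frontier A)) ≠ ⊤ :=
    ENNReal.mul_ne_top ENNReal.ofReal_ne_top (volume_cthickening_frontier_ne_top hA _)
  have := ENNReal.toReal_mono (ENNReal.add_ne_top.mpr ⟨ENNReal.natCast_ne_top _, hfin⟩) h
  rwa [ENNReal.toReal_add (ENNReal.natCast_ne_top _) hfin, ENNReal.toReal_mul,
    ENNReal.toReal_mul, ENNReal.toReal_natCast, ENNReal.toReal_ofReal (by positivity)] at this

end Scaling

theorem tendsto_div_of_le_mul_of_mul_le_add {α : Type*} {l : Filter α} {a b c ε : α → ℝ}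
    {v : ℝ} (hv : 0 < v) (hε : Tendsto ε l (𝓝 0)) (ha : ∀ᶠ x in l, 0 ≤ a x)
    (hc : ∀ᶠ x in l, 0 < c x) (hab : ∀ᶠ x in l, a x ≤ c x * ε x)
    (hb : ∀ᶠ x in l, c x * v ≤ b x + c x * ε x) :
    Tendsto (fun x => a x / b x) l (𝓝 0) := by
  have hlim : Tendsto (fun x => ε x / (v - ε x)) l (𝓝 0) := by
    have h := hε.div (tendsto_const_nhds.sub hε) (by simpa using hv.ne')
    rwa [zero_div] at h
  refine squeeze_zero' ?_ ?_ hlim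
  · filter_upwards [ha, hc, hb, hε.eventually_lt_const hv] with x hax hcx hbx hεx
    exact div_nonneg hax (by nlinarith)
  · filter_upwards [ha, hc, hab, hb, hε.eventually_lt_const hv] with x hax hcx habx hbx hεx
    calc a x / b x ≤ (c x * ε x) / (c x * (v - ε x)) :=
          div_le_div₀ (hax.trans habx) habx (mul_pos hcx (sub_pos.mpr hεx)) (by linarith)
      _ = ε x / (v - ε x) := mul_div_mul_left _ _ hcx.ne'

theorem stmt_11_general (d : ℕ) (A : Set (Fin d → ℝ))
    (hA : A ⊆ Set.Icc 0 1)
    (hreg : volume (frontier A) = 0) (hpos : 0 < volume A) :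
    Tendsto (fun n : ℕ =>
        (Nat.card {i : Fin d → ℤ | (fun k => (i k : ℝ)) ∈ (n : ℝ) • A ∧
            ∃ j : Fin d → ℤ, ¬ (fun k => (j k : ℝ)) ∈ (n : ℝ) • A ∧ ‖i - j‖ = 1} : ℝ)
          / (Nat.card {i : Fin d → ℤ | (fun k => (i k : ℝ)) ∈ (n : ℝ) • A} : ℝ))
      atTop (nhds 0) := by
  have hAb : IsBounded A := isBounded_Icc (0 : Fin d → ℝ) 1 |>.subset hA
  have hε : Tendsto (fun n : ℕ => (volume (cthickening (2 / n) (frontier A))).toReal)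
      atTop (𝓝 0) := by
    have h := tendsto_measure_cthickening_of_isClosed
      ⟨1, one_pos, volume_cthickening_frontier_ne_top hAb 1⟩ isClosed_frontier
    rw [hreg] at h
    exact (ENNReal.tendsto_toReal ENNReal.zero_ne_top).comp
      (h.comp (tendsto_const_div_atTop_nhds_zero_nat 2))
  have hn : ∀ᶠ n : ℕ in atTop, (0 : ℝ) < n :=
    (eventually_gt_atTop 0).mono fun n hn => Nat.cast_pos.mpr hn
  refine tendsto_div_of_le_mul_of_mul_le_add (c := fun n : ℕ => (n : ℝ) ^ Fintype.card (Fin d))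
    (ENNReal.toReal_pos hpos.ne' hAb.measure_lt_top.ne) hε
    (Eventually.of_forall fun _ => Nat.cast_nonneg _) (hn.mono fun _ h => by positivity)
    (hn.mono fun _ h => card_discreteBoundary_smul_le hAb h)
    (hn.mono fun _ h => mul_volume_le_card_latticePoints_smul_add hAb h)

/-- For a regular Borel set `A ⊆ [0,1]^d` (`λ(∂A) = 0`) with `λ(A) > 0`, the discrete
boundary of `Γ_n(A) = nA ∩ ℤ^d` is negligible: `|∂Γ_n(A)|/|Γ_n(A)| → 0`. -/
theorem stmt_11 (d : ℕ) (hd : 1 ≤ d) (A : Set (Fin d → ℝ))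
    (hA : A ⊆ Set.Icc 0 1) (hAmeas : MeasurableSet A)
    (hreg : volume (frontier A) = 0) (hpos : 0 < volume A) :
    Tendsto (fun n : ℕ =>
        (Nat.card {i : Fin d → ℤ | (fun k => (i k : ℝ)) ∈ (n : ℝ) • A ∧
            ∃ j : Fin d → ℤ, ¬ (fun k => (j k : ℝ)) ∈ (n : ℝ) • A ∧ ‖i - j‖ = 1} : ℝ)
          / (Nat.card {i : Fin d → ℤ | (fun k => (i k : ℝ)) ∈ (n : ℝ) • A} : ℝ))
      atTop (nhds 0) :=
  stmt_11_general d A hA hreg hpos
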